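/- Given any θ ≥ 1 and λ ≥ 0, there exists a global minimizer C° of the problem min over C ∈ ℝ^{n×m} of (1/2)‖Y − C‖_F² + θ·Σ_{i=1}^n P_H(‖c_i‖₂; λ) such that every row c_i° of C° satisfies either c_i° = 0 or ‖c_i°‖₂ ≥ λθ^{1/2} (and in particular ≥ λ). -/

import Mathlib

open MeasureTheory Matrix Filter
open scoped ENNReal NNReal BigOperators

noncomputable section

namespace RRRStmt

/-- Squared Frobenius norm `‖A‖_F²`. -/
def froSq {n m : ℕ} (A : Matrix (Fin n) (Fin m) ℝ) : ℝ := ∑ i, ∑ j, (A i j) ^ 2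

/-- Frobenius norm `‖A‖_F`. -/
def fro {n m : ℕ} (A : Matrix (Fin n) (Fin m) ℝ) : ℝ := Real.sqrt (froSq A)

/-- ℓ₂ norm of the `i`-th row of `A`. -/
def rowNorm {n m : ℕ} (A : Matrix (Fin n) (Fin m) ℝ) (i : Fin n) : ℝ :=
  Real.sqrt (∑ j, (A i j) ^ 2)

open Classical in
/-- Number of nonzero rows, `‖A‖_{2,0}`. -/
def numNZRows {n m : ℕ} (A : Matrix (Fin n) (Fin m) ℝ) : ℕ :=
  (Finset.univ.filter fun i => A i ≠ 0).card

open Classical in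
/-- Row support of `A`: indices of nonzero rows. -/
def rowSupp {n m : ℕ} (A : Matrix (Fin n) (Fin m) ℝ) : Finset (Fin n) :=
  Finset.univ.filter fun i => A i ≠ 0

open Classical in
/-- Number of entries at which two matrices differ, `‖A - B‖₀`. -/
def numDiff {n m : ℕ} (A B : Matrix (Fin n) (Fin m) ℝ) : ℕ :=
  (Finset.univ.filter fun q : Fin n × Fin m => A q.1 q.2 ≠ B q.1 q.2).card

/-- A threshold function `Θ(t; λ)`: odd, nondecreasing in `t`, tending to `∞`, and with
`0 ≤ Θ(t;λ) ≤ t` for `t ≥ 0`. -/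
def IsThresholdFun (Θ : ℝ → ℝ → ℝ) : Prop :=
  (∀ t lam : ℝ, 0 ≤ lam → Θ (-t) lam = -Θ t lam) ∧
  (∀ t t' lam : ℝ, 0 ≤ lam → t ≤ t' → Θ t lam ≤ Θ t' lam) ∧
  (∀ lam : ℝ, 0 ≤ lam → Tendsto (fun t => Θ t lam) atTop atTop) ∧
  (∀ t lam : ℝ, 0 ≤ lam → 0 ≤ t → 0 ≤ Θ t lam ∧ Θ t lam ≤ t)

/-- `Θ⁻¹(u;λ) = sup {s : Θ(s;λ) ≤ u}`. -/
def ThetaInv (Θ : ℝ → ℝ → ℝ) (lam u : ℝ) : ℝ := sSup {s : ℝ | Θ s lam ≤ u}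

/-- `P_Θ(t;λ) = ∫₀^{|t|} (Θ⁻¹(u;λ) - u) du`. -/
def PTheta (Θ : ℝ → ℝ → ℝ) (t lam : ℝ) : ℝ := ∫ u in (0:ℝ)..|t|, (ThetaInv Θ lam u - u)

/-- The penalty `P` is associated with the threshold `Θ` through the penalty construction:
`P(t;λ) - P(0;λ) = P_Θ(t;λ) + q(t;λ)` for some nonnegative `q` vanishing on the range of `Θ`. -/
def IsPenaltyFor (Θ P : ℝ → ℝ → ℝ) : Prop :=
  ∃ q : ℝ → ℝ → ℝ, (∀ t lam : ℝ, 0 ≤ lam → 0 ≤ q t lam) ∧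
    (∀ s lam : ℝ, 0 ≤ lam → q (Θ s lam) lam = 0) ∧
    (∀ t lam : ℝ, 0 ≤ lam → P t lam - P 0 lam = PTheta Θ t lam + q t lam)

/-- Euclidean norm of a vector. -/
def vnorm {m : ℕ} (a : Fin m → ℝ) : ℝ := Real.sqrt (∑ j, (a j) ^ 2)

open Classical in
/-- Multivariate thresholding `vecΘ(a;λ) = a·Θ(‖a‖₂;λ)/‖a‖₂` (and `0` at `0`). -/
def vecTheta (Θ : ℝ → ℝ → ℝ) (lam : ℝ) {m : ℕ} (a : Fin m → ℝ) : Fin m → ℝ :=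
  if a = 0 then 0 else (Θ (vnorm a) lam / vnorm a) • a

/-- Row-wise multivariate thresholding of a matrix. -/
def matTheta (Θ : ℝ → ℝ → ℝ) (lam : ℝ) {n m : ℕ} (A : Matrix (Fin n) (Fin m) ℝ) :
    Matrix (Fin n) (Fin m) ℝ :=
  Matrix.of fun i => vecTheta Θ lam (A i)

/-- Hard-thresholding penalty `P_H(t;λ)`. -/
def PH (t lam : ℝ) : ℝ := if |t| < lam then -t ^ 2 / 2 + lam * |t| else lam ^ 2 / 2

/-- Law of an `n × m` noise matrix with i.i.d. `N(0, σ²)` entries. -/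
def gaussianNoise (n m : ℕ) (σ : ℝ) : Measure (Fin n → Fin m → ℝ) :=
  Measure.pi fun _ => Measure.pi fun _ => ProbabilityTheory.gaussianReal 0 (Real.toNNReal (σ ^ 2))

/-- Robust loss `ρ(t;λ) = ∫₀^{|t|} (u - Θ(u;λ)) du`. -/
def rho (Θ : ℝ → ℝ → ℝ) (lam t : ℝ) : ℝ := ∫ u in (0:ℝ)..|t|, (u - Θ u lam)


/-! The problem separates over rows. On a row `y` with `r = ‖y‖₂` and a candidate `c` with
`t = ‖c‖₂`, the objective is at least `(r - t)²/2 + θ P_H(t; λ)`, which for `θ ≥ 1` is at least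
`min (r²/2, θλ²/2)`; keeping `y` when `r ≥ λ√θ` and zeroing it otherwise attains this bound. -/

lemma PH_zero {lam : ℝ} (hlam : 0 ≤ lam) : PH 0 lam = 0 := by
  rcases hlam.lt_or_eq with hlam | rfl <;> simp [PH, *]

lemma PH_of_le_abs {t lam : ℝ} (h : lam ≤ |t|) : PH t lam = lam ^ 2 / 2 :=
  if_neg h.not_gt

lemma vnorm_eq_norm {m : ℕ} (a : Fin m → ℝ) :
    vnorm a = ‖(WithLp.toLp 2 a : EuclideanSpace ℝ (Fin m))‖ := by
  simp [vnorm, EuclideanSpace.norm_eq]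

lemma vnorm_nonneg {m : ℕ} (a : Fin m → ℝ) : 0 ≤ vnorm a := Real.sqrt_nonneg _

lemma vnorm_sq {m : ℕ} (a : Fin m → ℝ) : vnorm a ^ 2 = ∑ j, a j ^ 2 :=
  Real.sq_sqrt (by positivity)

lemma vnorm_sub_vnorm_sq_le {m : ℕ} (y c : Fin m → ℝ) :
    (vnorm y - vnorm c) ^ 2 ≤ ∑ j, (y j - c j) ^ 2 := by
  have h := abs_norm_sub_norm_le (WithLp.toLp 2 y : EuclideanSpace ℝ (Fin m)) (WithLp.toLp 2 c)
  rw [← WithLp.toLp_sub, ← vnorm_eq_norm, ← vnorm_eq_norm, ← vnorm_eq_norm] at h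
  calc (vnorm y - vnorm c) ^ 2 ≤ vnorm (y - c) ^ 2 := sq_le_sq' (abs_le.1 h).1 (abs_le.1 h).2
    _ = ∑ j, (y j - c j) ^ 2 := by simp [vnorm_sq]

lemma min_le_half_sq_add_mul_PH {θ lam r t : ℝ} (hθ : 1 ≤ θ) (ht : 0 ≤ t) :
    min (r ^ 2 / 2) (θ * (lam ^ 2 / 2)) ≤ (r - t) ^ 2 / 2 + θ * PH t lam := by
  set s := Real.sqrt θ
  have hs : s ^ 2 = θ := Real.sq_sqrt (by linarith)
  have hs1 : 1 ≤ s := Real.one_le_sqrt.2 hθ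
  rcases lt_or_ge t lam with htl | htl
  · rw [PH, abs_of_nonneg ht, if_pos htl]
    rcases le_or_gt r (s * lam) with hrl | hrl
    · have hs_le : s * lam ≤ (θ + 1) / 2 * lam := by
        nlinarith [mul_nonneg (sq_nonneg (s - 1)) (ht.trans htl.le)]
      refine (min_le_left _ _).trans ?_
      nlinarith [mul_nonneg ht (sub_nonneg.2 htl.le)]
    · have hst : s * (lam - t) ≤ r - t := by nlinarith
      have : θ * (lam - t) ^ 2 ≤ (r - t) ^ 2 := by
        rw [← hs, ← mul_pow]; exact pow_le_pow_left₀ (by nlinarith) hst 2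
      refine (min_le_right _ _).trans ?_
      nlinarith
  · rw [PH_of_le_abs (by rwa [abs_of_nonneg ht])]
    exact (min_le_right _ _).trans (by nlinarith [sq_nonneg (r - t)])

def hardThreshold (θ lam : ℝ) {m : ℕ} (y : Fin m → ℝ) : Fin m → ℝ :=
  if lam * Real.sqrt θ ≤ vnorm y then y else 0

def rowObjective (θ lam : ℝ) {m : ℕ} (y c : Fin m → ℝ) : ℝ :=
  (∑ j, (y j - c j) ^ 2) / 2 + θ * PH (vnorm c) lam

lemma objective_eq_sum_rowObjective {n m : ℕ} (θ lam : ℝ) (Y C : Matrix (Fin n) (Fin m) ℝ) :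
    (1/2) * froSq (Y - C) + θ * ∑ i, PH (rowNorm C i) lam
      = ∑ i, rowObjective θ lam (Y i) (C i) := by
  simp only [froSq, rowObjective, rowNorm, vnorm, Matrix.sub_apply, Finset.mul_sum,
    Finset.sum_add_distrib, Finset.sum_div]
  congr 1
  exact Finset.sum_congr rfl fun i _ => Finset.sum_congr rfl fun j _ => by ring

section

variable {θ lam : ℝ} {m : ℕ} (y : Fin m → ℝ)

lemma rowObjective_hardThreshold (hθ : 1 ≤ θ) (hlam : 0 ≤ lam) :
    rowObjective θ lam y (hardThreshold θ lam y) = min (vnorm y ^ 2 / 2) (θ * (lam ^ 2 / 2)) := by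
  have hs : Real.sqrt θ ^ 2 = θ := Real.sq_sqrt (by linarith)
  have hy := vnorm_nonneg y
  unfold hardThreshold rowObjective
  split_ifs with h
  · have hlam_le : lam ≤ |vnorm y| :=
      (le_mul_of_one_le_right hlam (Real.one_le_sqrt.2 hθ)).trans (h.trans (le_abs_self _))
    rw [PH_of_le_abs hlam_le, min_eq_right]
    · simp
    · nlinarith [mul_nonneg hlam (Real.sqrt_nonneg θ)]
  · have hzero : vnorm (0 : Fin m → ℝ) = 0 := by simp [vnorm]
    rw [hzero, PH_zero hlam, min_eq_left]
    · simp [vnorm_sq]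
    · nlinarith

lemma min_le_rowObjective (hθ : 1 ≤ θ) (c : Fin m → ℝ) :
    min (vnorm y ^ 2 / 2) (θ * (lam ^ 2 / 2)) ≤ rowObjective θ lam y c := by
  refine (min_le_half_sq_add_mul_PH hθ (vnorm_nonneg c)).trans ?_
  unfold rowObjective
  gcongr
  exact vnorm_sub_vnorm_sq_le y c

lemma hardThreshold_eq_zero_or_le_vnorm :
    hardThreshold θ lam y = 0 ∨ lam * Real.sqrt θ ≤ vnorm (hardThreshold θ lam y) := by
  unfold hardThreshold
  split_ifs with h
  · exact Or.inr h
  · exact Or.inl rfl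

end

/-- Lemma 4: the group hard-thresholding penalty problem admits a global
minimizer each of whose rows is either zero or has ℓ₂ norm at least `λ√θ` (hence at least `λ`). -/
theorem hard_penalty_minimizer_rows {n m : ℕ} (Y : Matrix (Fin n) (Fin m) ℝ)
    (θ lam : ℝ) (hθ : 1 ≤ θ) (hlam : 0 ≤ lam) :
    ∃ Co : Matrix (Fin n) (Fin m) ℝ,
      (∀ C : Matrix (Fin n) (Fin m) ℝ,
        (1/2) * froSq (Y - Co) + θ * ∑ i, PH (rowNorm Co i) lam
          ≤ (1/2) * froSq (Y - C) + θ * ∑ i, PH (rowNorm C i) lam) ∧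
      (∀ i : Fin n, Co i = 0 ∨
        (lam * Real.sqrt θ ≤ rowNorm Co i ∧ lam ≤ rowNorm Co i)) := by
  refine ⟨Matrix.of fun i => hardThreshold θ lam (Y i), fun C => ?_, fun i => ?_⟩
  · rw [objective_eq_sum_rowObjective, objective_eq_sum_rowObjective]
    refine Finset.sum_le_sum fun i _ => ?_
    exact (rowObjective_hardThreshold (Y i) hθ hlam).trans_le (min_le_rowObjective _ hθ _)
  · refine (hardThreshold_eq_zero_or_le_vnorm (Y i)).imp id fun h => ⟨h, ?_⟩
    exact (le_mul_of_one_le_right hlam (Real.one_le_sqrt.2 hθ)).trans h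

end RRRStmt
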